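/- Let M = V_1 ⊕ ... ⊕ V_n be a finite direct sum of virtually simple left R-modules. If N is a nonzero submodule of M, then there is an index j such that V_j embeds into N. -/

import Mathlib

/-!
Induct on the finite set `s` of summands with `N ≤ ⨆ i ∈ s, V i`. When `s = insert a t`, either
`N` meets `⨆ i ∈ t, V i` nontrivially, and the induction hypothesis applies to that intersection,
or it does not, and then reduction modulo `⨆ i ∈ t, V i` embeds `N` into the image of `V a`.
In the latter case `N` is isomorphic to a nonzero submodule of `V a`, hence to `V a` itself.
-/

def VirtuallySimple (R : Type*) [Ring R] (M : Type*) [AddCommGroup M] [Module R M] : Prop :=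
  Nontrivial M ∧ ∀ N : Submodule R M, N ≠ ⊥ → Nonempty (N ≃ₗ[R] M)

section

variable {R : Type*} [Ring R] {M : Type*} [AddCommGroup M] [Module R M]

theorem VirtuallySimple.nonempty_linearEquiv_of_le_range {A Q : Type*} [AddCommGroup A]
    [Module R A] [AddCommGroup Q] [Module R Q] (hA : VirtuallySimple R A) {f : A →ₗ[R] Q}
    (hf : Function.Injective f) {P : Submodule R Q} (hP : P ≠ ⊥) (hPf : P ≤ LinearMap.range f) :
    Nonempty (A ≃ₗ[R] P) := by
  have hcomap : P.comap f ≠ ⊥ := by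
    contrapose! hP
    rw [← Submodule.map_comap_eq_of_le hPf, hP, Submodule.map_bot]
  obtain ⟨e⟩ := hA.2 _ hcomap
  exact ⟨e.symm.trans ((Submodule.equivMapOfInjective f hf _).trans
    (LinearEquiv.ofEq _ _ (Submodule.map_comap_eq_of_le hPf)))⟩

theorem VirtuallySimple.nonempty_linearEquiv_of_le_sup {A B N : Submodule R M}
    (hA : VirtuallySimple R A) (hAB : Disjoint A B) (hN : N ≠ ⊥) (hNAB : N ≤ A ⊔ B)
    (hNB : Disjoint N B) : Nonempty (A ≃ₗ[R] N) := by
  have hinj : ∀ {S : Submodule R M}, Disjoint S B → Function.Injective (B.mkQ.domRestrict S) :=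
    fun h => LinearMap.injective_domRestrict_iff.2 (by rwa [Submodule.ker_mkQ])
  have hrange : LinearMap.range (B.mkQ.domRestrict N) ≤ LinearMap.range (B.mkQ.domRestrict A) := by
    simp only [LinearMap.range_domRestrict]
    calc N.map B.mkQ ≤ (A ⊔ B).map B.mkQ := Submodule.map_mono hNAB
      _ = A.map B.mkQ := by rw [Submodule.map_sup, Submodule.mkQ_map_self, sup_bot_eq]
  have hne : LinearMap.range (B.mkQ.domRestrict N) ≠ ⊥ := by
    have := Submodule.nontrivial_iff_ne_bot.2 hN
    rw [Ne, LinearMap.range_eq_bot]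
    exact LinearMap.ne_zero_of_injective (hinj hNB)
  obtain ⟨e⟩ := hA.nonempty_linearEquiv_of_le_range (hinj hAB) hne hrange
  exact ⟨e.trans (LinearEquiv.ofInjective _ (hinj hNB)).symm⟩

theorem iSupIndep.exists_injective_of_le_biSup {ι : Type*} {V : ι → Submodule R M}
    (hind : iSupIndep V) (hvs : ∀ i, VirtuallySimple R (V i)) (s : Finset ι)
    {N : Submodule R M} (hN : N ≠ ⊥) (hNs : N ≤ ⨆ i ∈ s, V i) :
    ∃ j ∈ s, ∃ f : V j →ₗ[R] N, Function.Injective f := by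
  classical
  induction s using Finset.induction_on generalizing N with
  | empty => simp_all
  | insert a s has ih =>
    by_cases hNs' : N ⊓ ⨆ i ∈ s, V i = ⊥
    · obtain ⟨e⟩ := (hvs a).nonempty_linearEquiv_of_le_sup
        (hind.disjoint_biSup (by simpa using has)) hN (by rwa [Finset.iSup_insert] at hNs)
        (disjoint_iff.2 hNs')
      exact ⟨a, Finset.mem_insert_self a s, e, e.injective⟩
    · obtain ⟨j, hj, f, hf⟩ := ih hNs' inf_le_right
      exact ⟨j, Finset.mem_insert_of_mem hj, Submodule.inclusion inf_le_left ∘ₗ f,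
        (Submodule.inclusion_injective inf_le_left).comp hf⟩

end

/-- If `M` is a finite direct sum of virtually simple submodules and `N ≤ M` is
nonzero, then some `V j` embeds into `N`. -/
theorem stmt10 (R : Type*) [Ring R] (M : Type*) [AddCommGroup M] [Module R M]
    (n : ℕ) (V : Fin n → Submodule R M) (hind : iSupIndep V) (hsup : iSup V = ⊤)
    (hvs : ∀ i, VirtuallySimple R (V i))
    (N : Submodule R M) (hN : N ≠ ⊥) :
    ∃ j : Fin n, ∃ f : V j →ₗ[R] N, Function.Injective f := by
  obtain ⟨j, -, hj⟩ := hind.exists_injective_of_le_biSup hvs Finset.univ hN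
    (by simp only [Finset.mem_univ, iSup_pos, hsup, le_top])
  exact ⟨j, hj⟩
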